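/- Let X be a Banach space, K : X → X a bounded linear operator such that I − K is invertible with ‖(I−K)⁻¹‖ ≤ Z, and A : X → X a bounded linear operator with ‖A‖ ≤ θ, where Zθ < 1/2. Let u* solve (I−K)u* = b and let u solve (I−K)u = b + A(u). Then ‖u − u*‖ ≤ 2Z²θ‖b‖. -/

import Mathlib

/-! Inverting `I - K` turns both equations into explicit formulas: `u = (I - K)⁻¹ (b + A u)`
gives `‖u‖ ≤ Z ‖b‖ + Zθ ‖u‖`, hence `‖u‖ ≤ 2Z ‖b‖` because `Zθ < 1/2`; and `u - u*` solves
`(I - K)(u - u*) = A u`, so `‖u - u*‖ ≤ Zθ ‖u‖ ≤ 2Z²θ ‖b‖`. -/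

namespace ContinuousLinearMap

variable {𝕜 E : Type*} [NontriviallyNormedField 𝕜] [SeminormedAddCommGroup E] [NormedSpace 𝕜 E]
  {K A T : E →L[𝕜] E} {Z θ : ℝ}

theorem norm_le_of_sub_apply_eq
    (hT : T.comp (ContinuousLinearMap.id 𝕜 E - K) = ContinuousLinearMap.id 𝕜 E)
    (hZ : ‖T‖ ≤ Z) {x y : E} (h : x - K x = y) : ‖x‖ ≤ Z * ‖y‖ := by
  have hx : x = T y := by
    simpa [← h] using (congrArg (fun S : E →L[𝕜] E => S x) hT).symm
  exact hx ▸ T.le_of_opNorm_le hZ y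

theorem norm_le_two_mul_of_sub_apply_eq_add_apply
    (hT : T.comp (ContinuousLinearMap.id 𝕜 E - K) = ContinuousLinearMap.id 𝕜 E)
    (hZ : ‖T‖ ≤ Z) (hθ : ‖A‖ ≤ θ) (hZθ : Z * θ < 1 / 2) {b u : E}
    (hu : u - K u = b + A u) : ‖u‖ ≤ 2 * Z * ‖b‖ := by
  have hZ0 : 0 ≤ Z := (norm_nonneg T).trans hZ
  have hu_le : ‖u‖ ≤ Z * (‖b‖ + θ * ‖u‖) :=
    calc ‖u‖ ≤ Z * ‖b + A u‖ := norm_le_of_sub_apply_eq hT hZ hu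
      _ ≤ Z * (‖b‖ + θ * ‖u‖) := by
        gcongr
        exact (norm_add_le _ _).trans (by gcongr; exact A.le_of_opNorm_le hθ u)
  nlinarith [norm_nonneg u]

end ContinuousLinearMap

theorem stmt_1_general {X : Type*} [NormedAddCommGroup X] [NormedSpace ℂ X]
    (K A Tinv : X →L[ℂ] X)
    (hTl : Tinv.comp (ContinuousLinearMap.id ℂ X - K) = ContinuousLinearMap.id ℂ X)
    (Z θ : ℝ) (hZ : ‖Tinv‖ ≤ Z) (hθ : ‖A‖ ≤ θ) (hZθ : Z * θ < 1 / 2)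
    (b uStar u : X)
    (huStar : uStar - K uStar = b)
    (hu : u - K u = b + A u) :
    ‖u - uStar‖ ≤ 2 * Z ^ 2 * θ * ‖b‖ := by
  have hZ0 : 0 ≤ Z := (norm_nonneg Tinv).trans hZ
  have hθ0 : 0 ≤ θ := (norm_nonneg A).trans hθ
  have hu_le :=
    ContinuousLinearMap.norm_le_two_mul_of_sub_apply_eq_add_apply hTl hZ hθ hZθ hu
  have hdiff : (u - uStar) - K (u - uStar) = A u := by
    rw [map_sub, sub_sub_sub_comm, hu, huStar, add_sub_cancel_left]
  calc ‖u - uStar‖ ≤ Z * ‖A u‖ :=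
      ContinuousLinearMap.norm_le_of_sub_apply_eq hTl hZ hdiff
    _ ≤ Z * (θ * (2 * Z * ‖b‖)) := by
      gcongr
      exact (A.le_of_opNorm_le hθ u).trans (by gcongr)
    _ = 2 * Z ^ 2 * θ * ‖b‖ := by ring

/-- Abstract stability estimate (8.9) of Lemma 3.4: if `I - K` has bounded
inverse of norm `≤ Z`, `‖A‖ ≤ θ` with `Zθ < 1/2`, `u*` solves `(I-K)u* = b`
and `u` solves `(I-K)u = b + A u`, then `‖u - u*‖ ≤ 2 Z² θ ‖b‖`. -/
theorem stmt_1 {X : Type*} [NormedAddCommGroup X] [NormedSpace ℂ X] [CompleteSpace X]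
    (K A Tinv : X →L[ℂ] X)
    (hTl : Tinv.comp (ContinuousLinearMap.id ℂ X - K) = ContinuousLinearMap.id ℂ X)
    (hTr : (ContinuousLinearMap.id ℂ X - K).comp Tinv = ContinuousLinearMap.id ℂ X)
    (Z θ : ℝ) (hZ : ‖Tinv‖ ≤ Z) (hθ : ‖A‖ ≤ θ) (hZθ : Z * θ < 1 / 2)
    (b uStar u : X)
    (huStar : uStar - K uStar = b)
    (hu : u - K u = b + A u) :
    ‖u - uStar‖ ≤ 2 * Z ^ 2 * θ * ‖b‖ :=
  stmt_1_general K A Tinv hTl Z θ hZ hθ hZθ b uStar u huStar hu
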